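/- Let a, n ∈ ℝ³ with |n| = 1, a not parallel to n, let ε > 0, and let h ∈ C¹(ℝ) with h(0) = 0, ḣ(0) = 0 and ‖ḣ‖_∞ < ε/|a|². Define f : ℝ³ → ℝ by f(x) = x · n + h(x · (a ∧ n)), where a ∧ n is the cross product. Then: (i) f(0) = 0; (ii) ∇f(x) = n + ḣ(x · (a ∧ n)) (a ∧ n) for all x, and in particular ∇f(0) = n; (iii) a · ∇f(x) = a · n for all x; (iv) |∇f(x) − n| < ε/|a| for all x; and (v) if ḣ is not constant, then the map x ↦ ∇f(x)/|∇f(x)| is not constant on the level set Γ = {x ∈ ℝ³ : f(x) = 0}, i.e. Γ is a non-planar C¹ surface. -/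

import Mathlib

/-!
The gradient of `f` is `n + ḣ(x · c) c` with `c = a ∧ n`. Since `c` is orthogonal to both `a`
and `n`, the component of `∇f` along `a` is that of `n`, and `|∇f - n| = |ḣ| |c| ≤ |ḣ| |a|`.
For non-planarity: `c ≠ 0` because `a` is not parallel to `n`, so every value `t` of `x · c` is
attained on `{f = 0}` (take `x · n = -h(t)`). Pairing the unit normal `(n + ḣ(t) c)/|n + ḣ(t) c|`
with `n` recovers its length, hence the unnormalized gradient and `ḣ(t)`; so a constant unit
normal forces `ḣ` to be constant.
-/

open Metric Set MeasureTheory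
open scoped RealInnerProductSpace NNReal

noncomputable section

abbrev Euc (d : ℕ) := EuclideanSpace ℝ (Fin d)

def cross3 (a b : Euc 3) : Euc 3 :=
  (WithLp.equiv 2 (Fin 3 → ℝ)).symm
    ![a 1 * b 2 - a 2 * b 1, a 2 * b 0 - a 0 * b 2, a 0 * b 1 - a 1 * b 0]

def f7 (a n : Euc 3) (h : ℝ → ℝ) (x : Euc 3) : ℝ :=
  ⟪x, n⟫ + h ⟪x, cross3 a n⟫

section InnerProductSpace

variable {E : Type*} [NormedAddCommGroup E] [InnerProductSpace ℝ E]

lemma hasGradientAt_inner_add_comp_inner [CompleteSpace E] {h : ℝ → ℝ} (u v : E) {x : E}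
    (hh : DifferentiableAt ℝ h ⟪x, v⟫) :
    HasGradientAt (fun y => ⟪y, u⟫ + h ⟪y, v⟫) (u + deriv h ⟪x, v⟫ • v) x := by
  have inner_right (w : E) : HasFDerivAt (fun y : E => ⟪y, w⟫) (innerSL ℝ w) x := by
    convert (innerSL ℝ w).hasFDerivAt using 1
    exact funext fun y => real_inner_comm w y
  rw [hasGradientAt_iff_hasFDerivAt]
  refine ((inner_right u).add (hh.hasDerivAt.comp_hasFDerivAt x (inner_right v))).congr_fderiv ?_
  ext y
  simp [real_inner_comm]

lemma exists_inner_eq_and_inner_eq {u v : E} (hu : ‖u‖ = 1) (huv : ⟪u, v⟫ = 0) (hv : v ≠ 0)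
    (s t : ℝ) : ∃ x : E, ⟪x, u⟫ = s ∧ ⟪x, v⟫ = t := by
  refine ⟨s • u + (t / ‖v‖ ^ 2) • v, ?_, ?_⟩
  · rw [inner_add_left, real_inner_smul_left, real_inner_smul_left, real_inner_comm u v, huv,
      real_inner_self_eq_norm_sq, hu]
    ring
  · rw [inner_add_left, real_inner_smul_left, real_inner_smul_left, huv,
      real_inner_self_eq_norm_sq]
    field_simp
    ring

lemma normalize_add_smul_injective {u v : E} (hu : u ≠ 0) (huv : ⟪u, v⟫ = 0) (hv : v ≠ 0)
    {s t : ℝ} (hst : ‖u + s • v‖⁻¹ • (u + s • v) = ‖u + t • v‖⁻¹ • (u + t • v)) : s = t := by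
  have inner_u (r : ℝ) : ⟪u, u + r • v⟫ = ‖u‖ ^ 2 := by
    rw [inner_add_right, real_inner_smul_right, huv, mul_zero, add_zero,
      real_inner_self_eq_norm_sq]
  have hnorm : ‖u + s • v‖⁻¹ = ‖u + t • v‖⁻¹ := by
    have := congrArg (⟪u, ·⟫) hst
    simp only [real_inner_smul_right, inner_u] at this
    exact mul_right_cancel₀ (by positivity) this
  have hne : ‖u + t • v‖⁻¹ ≠ 0 := by
    refine inv_ne_zero (norm_ne_zero_iff.2 fun h0 => hu ?_)
    have := inner_u t
    rw [h0, inner_zero_right] at this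
    exact norm_eq_zero.1 (pow_eq_zero_iff two_ne_zero |>.1 this.symm)
  rw [hnorm] at hst
  exact smul_left_injective ℝ hv (add_left_cancel (smul_right_injective E hne hst))

end InnerProductSpace

section CrossProduct

lemma cross3_eq_crossProduct (a b : Euc 3) :
    cross3 a b = WithLp.toLp 2 (crossProduct (WithLp.ofLp a) (WithLp.ofLp b)) := by
  ext i
  fin_cases i <;> simp [cross3, cross_apply]

lemma real_inner_eq_dotProduct {ι : Type*} [Fintype ι] (x y : EuclideanSpace ℝ ι) :
    ⟪x, y⟫ = WithLp.ofLp x ⬝ᵥ WithLp.ofLp y := by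
  rw [EuclideanSpace.inner_eq_star_dotProduct, star_trivial, dotProduct_comm]

lemma inner_self_cross3 (a b : Euc 3) : ⟪a, cross3 a b⟫ = 0 := by
  rw [real_inner_eq_dotProduct, cross3_eq_crossProduct]
  exact dot_self_cross _ _

lemma inner_cross3_self (a b : Euc 3) : ⟪b, cross3 a b⟫ = 0 := by
  rw [real_inner_eq_dotProduct, cross3_eq_crossProduct]
  exact dot_cross_self _ _

lemma norm_cross3_sq (a b : Euc 3) : ‖cross3 a b‖ ^ 2 = ‖a‖ ^ 2 * ‖b‖ ^ 2 - ⟪a, b⟫ ^ 2 := by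
  simp only [← real_inner_self_eq_norm_sq, real_inner_eq_dotProduct, cross3_eq_crossProduct,
    cross_dot_cross, dotProduct_comm (WithLp.ofLp b)]
  ring

lemma norm_cross3_le (a b : Euc 3) : ‖cross3 a b‖ ≤ ‖a‖ * ‖b‖ := by
  rw [← pow_le_pow_iff_left₀ (norm_nonneg _) (by positivity) two_ne_zero, mul_pow,
    norm_cross3_sq]
  exact sub_le_self _ (sq_nonneg _)

lemma norm_cross3_eq_norm_sub_proj {a n : Euc 3} (hn : ‖n‖ = 1) :
    ‖cross3 a n‖ = ‖a - ⟪a, n⟫ • n‖ := by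
  refine (sq_eq_sq₀ (norm_nonneg _) (norm_nonneg _)).1 ?_
  rw [norm_cross3_sq, norm_sub_sq_real, real_inner_smul_right, norm_smul, hn]
  simp
  ring

lemma cross3_ne_zero {a n : Euc 3} (hn : ‖n‖ = 1) (hpar : ¬∃ c : ℝ, a = c • n) :
    cross3 a n ≠ 0 := by
  rw [← norm_ne_zero_iff, norm_cross3_eq_norm_sub_proj hn, norm_ne_zero_iff, sub_ne_zero]
  exact fun h => hpar ⟨_, h⟩

end CrossProduct

section GradientF7

variable {a n : Euc 3} {h : ℝ → ℝ}

lemma gradient_f7 (hh : Differentiable ℝ h) (x : Euc 3) :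
    gradient (f7 a n h) x = n + deriv h ⟪x, cross3 a n⟫ • cross3 a n :=
  (hasGradientAt_inner_add_comp_inner n (cross3 a n) (hh _)).gradient

lemma inner_gradient_f7 (hh : Differentiable ℝ h) (x : Euc 3) :
    ⟪a, gradient (f7 a n h) x⟫ = ⟪a, n⟫ := by
  rw [gradient_f7 hh, inner_add_right, real_inner_smul_right, inner_self_cross3, mul_zero,
    add_zero]

lemma norm_gradient_f7_sub_le (hh : Differentiable ℝ h) (hn : ‖n‖ = 1) (x : Euc 3) :
    ‖gradient (f7 a n h) x - n‖ ≤ |deriv h ⟪x, cross3 a n⟫| * ‖a‖ := by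
  rw [gradient_f7 hh, add_sub_cancel_left, norm_smul, Real.norm_eq_abs]
  gcongr
  simpa [hn] using norm_cross3_le a n

lemma deriv_eq_of_normalized_gradient_f7_eq (hh : Differentiable ℝ h) (hn : ‖n‖ = 1)
    (hpar : ¬∃ c : ℝ, a = c • n) {x y : Euc 3}
    (hxy : ‖gradient (f7 a n h) x‖⁻¹ • gradient (f7 a n h) x
      = ‖gradient (f7 a n h) y‖⁻¹ • gradient (f7 a n h) y) :
    deriv h ⟪x, cross3 a n⟫ = deriv h ⟪y, cross3 a n⟫ := by
  rw [gradient_f7 hh, gradient_f7 hh] at hxy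
  exact normalize_add_smul_injective (norm_ne_zero_iff.1 (by simp [hn])) (inner_cross3_self a n)
    (cross3_ne_zero hn hpar) hxy

end GradientF7

theorem statement7_general (a n : Euc 3) (hn : ‖n‖ = 1) (hpar : ¬∃ c : ℝ, a = c • n)
    (ε : ℝ) (h : ℝ → ℝ) (hh : ContDiff ℝ 1 h)
    (h0 : h 0 = 0) (h0' : deriv h 0 = 0)
    (hsup : ∃ M : ℝ, (∀ t : ℝ, |deriv h t| ≤ M) ∧ M < ε / ‖a‖ ^ 2) :
    f7 a n h 0 = 0 ∧
    (∀ x : Euc 3, gradient (f7 a n h) x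
      = n + deriv h ⟪x, cross3 a n⟫ • cross3 a n) ∧
    gradient (f7 a n h) 0 = n ∧
    (∀ x : Euc 3, ⟪a, gradient (f7 a n h) x⟫ = ⟪a, n⟫) ∧
    (∀ x : Euc 3, ‖gradient (f7 a n h) x - n‖ < ε / ‖a‖) ∧
    ((¬∃ c : ℝ, ∀ t : ℝ, deriv h t = c) →
      ¬∃ ν : Euc 3, ∀ x : Euc 3, f7 a n h x = 0 →
        ‖gradient (f7 a n h) x‖⁻¹ • gradient (f7 a n h) x = ν) := by
  have hd : Differentiable ℝ h := hh.differentiable one_ne_zero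
  have hf0 : f7 a n h 0 = 0 := by simp [f7, h0]
  have ha : 0 < ‖a‖ := norm_pos_iff.2 fun ha => hpar ⟨0, by simp [ha]⟩
  obtain ⟨M, hM, hMε⟩ := hsup
  refine ⟨hf0, gradient_f7 hd, by simp [gradient_f7 hd, h0'], inner_gradient_f7 hd,
    fun x => ?_, ?_⟩
  · calc ‖gradient (f7 a n h) x - n‖ ≤ |deriv h ⟪x, cross3 a n⟫| * ‖a‖ :=
          norm_gradient_f7_sub_le hd hn x
      _ ≤ M * ‖a‖ := by gcongr; exact hM _
      _ < ε / ‖a‖ ^ 2 * ‖a‖ := by gcongr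
      _ = ε / ‖a‖ := by field_simp
  · rintro hnonconst ⟨ν, hν⟩
    refine hnonconst ⟨deriv h 0, fun t => ?_⟩
    obtain ⟨x, hxn, hxc⟩ := exists_inner_eq_and_inner_eq hn (inner_cross3_self a n)
      (cross3_ne_zero hn hpar) (-h t) t
    have hx : f7 a n h x = 0 := by simp [f7, hxn, hxc]
    simpa [hxc] using deriv_eq_of_normalized_gradient_f7_eq hd hn hpar
      ((hν x hx).trans (hν 0 hf0).symm)

/-- For `f(x) = x · n + h(x · (a ∧ n))` with `|n| = 1`, `a` not parallel
to `n`, `h ∈ C¹(ℝ)`, `h(0) = ḣ(0) = 0` and `‖ḣ‖_∞ < ε/|a|²`: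
(i) `f(0) = 0`; (ii) `∇f(x) = n + ḣ(x · (a ∧ n)) (a ∧ n)`, in particular `∇f(0) = n`;
(iii) `a · ∇f(x) = a · n`; (iv) `|∇f(x) - n| < ε/|a|`; and (v) if `ḣ` is not constant
then `x ↦ ∇f(x)/|∇f(x)|` is not constant on the level set `{f = 0}`. -/
theorem statement7 (a n : Euc 3) (hn : ‖n‖ = 1) (hpar : ¬∃ c : ℝ, a = c • n)
    (ε : ℝ) (hε : 0 < ε) (h : ℝ → ℝ) (hh : ContDiff ℝ 1 h)
    (h0 : h 0 = 0) (h0' : deriv h 0 = 0)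
    (hsup : ∃ M : ℝ, (∀ t : ℝ, |deriv h t| ≤ M) ∧ M < ε / ‖a‖ ^ 2) :
    f7 a n h 0 = 0 ∧
    (∀ x : Euc 3, gradient (f7 a n h) x
      = n + deriv h ⟪x, cross3 a n⟫ • cross3 a n) ∧
    gradient (f7 a n h) 0 = n ∧
    (∀ x : Euc 3, ⟪a, gradient (f7 a n h) x⟫ = ⟪a, n⟫) ∧
    (∀ x : Euc 3, ‖gradient (f7 a n h) x - n‖ < ε / ‖a‖) ∧
    ((¬∃ c : ℝ, ∀ t : ℝ, deriv h t = c) →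
      ¬∃ ν : Euc 3, ∀ x : Euc 3, f7 a n h x = 0 →
        ‖gradient (f7 a n h) x‖⁻¹ • gradient (f7 a n h) x = ν) :=
  statement7_general a n hn hpar ε h hh h0 h0' hsup

end
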